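/- arXiv:2410.20920 — 10 statements merged into one kernel-verified Lean document; each statement's English description precedes it below -/
import Mathlib

section
/- Let T be a bounded operator with closed range on a Hilbert space and let n ≥ 1 be an integer. Then the range of TⁿT† equals the range of Tⁿ, which equals the range of TⁿT*. -/
theorem stmt_3 {H : Type*} [NormedAddCommGroup H] [InnerProductSpace ℂ H] [CompleteSpace H]
    (T Td : H →L[ℂ] H)
    (hclosed : IsClosed (LinearMap.range (T : H →ₗ[ℂ] H) : Set H))
    (hp1 : T ∘L Td ∘L T = T) (hp2 : Td ∘L T ∘L Td = Td)
    (hp3 : ContinuousLinearMap.adjoint (Td ∘L T) = Td ∘L T)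
    (hp4 : ContinuousLinearMap.adjoint (T ∘L Td) = T ∘L Td)
    (n : ℕ) (hn : 1 ≤ n)
    :
    LinearMap.range (((T ^ n) ∘L Td : H →L[ℂ] H) : H →ₗ[ℂ] H) = LinearMap.range ((T ^ n : H →L[ℂ] H) : H →ₗ[ℂ] H) ∧ LinearMap.range ((T ^ n : H →L[ℂ] H) : H →ₗ[ℂ] H) = LinearMap.range (((T ^ n) ∘L ContinuousLinearMap.adjoint T : H →L[ℂ] H) : H →ₗ[ℂ] H) := by
  obtain ⟨m, rfl⟩ : ∃ m, n = m + 1 := ⟨n - 1, (Nat.succ_pred_eq_of_pos hn).symm⟩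
  have h1 : ∀ x, T (Td (T x)) = T x := fun x => congrArg (fun f => f x) hp1
  have hTdT : Td ∘L T = ContinuousLinearMap.adjoint T ∘L ContinuousLinearMap.adjoint Td := by
    rw [← hp3, ContinuousLinearMap.adjoint_comp]
  have h2 : ∀ x, T (ContinuousLinearMap.adjoint T (ContinuousLinearMap.adjoint Td x)) = T x := by
    intro x
    have := congrArg (fun f : H →L[ℂ] H => T (f x)) hTdT
    simpa using (this.symm.trans (h1 x))
  have hpow : ∀ x, (T ^ (m + 1)) x = (T ^ m) (T x) := by
    intro x
    rw [pow_succ]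
    rfl
  constructor
  · apply le_antisymm
    · rintro _ ⟨x, rfl⟩
      exact ⟨Td x, rfl⟩
    · rintro _ ⟨x, rfl⟩
      refine ⟨T x, ?_⟩
      show (T ^ (m + 1)) (Td (T x)) = (T ^ (m + 1)) x
      rw [hpow, hpow, h1]
  · apply le_antisymm
    · rintro _ ⟨x, rfl⟩
      refine ⟨ContinuousLinearMap.adjoint Td x, ?_⟩
      show (T ^ (m + 1)) (ContinuousLinearMap.adjoint T (ContinuousLinearMap.adjoint Td x)) = (T ^ (m + 1)) x
      rw [hpow, hpow, h2]
    · rintro _ ⟨x, rfl⟩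
      exact ⟨ContinuousLinearMap.adjoint T x, rfl⟩
end

section
/- Let T be a bounded operator with closed range on a Hilbert space and n ≥ 1. Then T†Tⁿ = TⁿT† (T is n-EP) if and only if range(Tⁿ) ⊆ range(T*) and range(T*ⁿ) ⊆ range(T). -/
theorem stmt_4 {H : Type*} [NormedAddCommGroup H] [InnerProductSpace ℂ H] [CompleteSpace H]
    (T Td : H →L[ℂ] H)
    (hclosed : IsClosed (LinearMap.range (T : H →ₗ[ℂ] H) : Set H))
    (hp1 : T ∘L Td ∘L T = T) (hp2 : Td ∘L T ∘L Td = Td)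
    (hp3 : ContinuousLinearMap.adjoint (Td ∘L T) = Td ∘L T)
    (hp4 : ContinuousLinearMap.adjoint (T ∘L Td) = T ∘L Td)
    (n : ℕ) (hn : 1 ≤ n)
    :
    (T ^ n) ∘L Td = Td ∘L (T ^ n) ↔ (LinearMap.range (((T ^ n : H →L[ℂ] H) : H →ₗ[ℂ] H)) ≤ LinearMap.range ((ContinuousLinearMap.adjoint T : H →L[ℂ] H) : H →ₗ[ℂ] H) ∧ LinearMap.range ((((ContinuousLinearMap.adjoint T) ^ n : H →L[ℂ] H) : H →ₗ[ℂ] H)) ≤ LinearMap.range (T : H →ₗ[ℂ] H)) := by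
  obtain ⟨m, rfl⟩ : ∃ m, n = m + 1 := ⟨n - 1, (Nat.succ_pred_eq_of_pos hn).symm⟩
  set S := ContinuousLinearMap.adjoint T with hS
  have hstar : star T = S := ContinuousLinearMap.star_eq_adjoint T
  have k1 : T * (Td * T) = T := hp1
  have k2 : Td * (T * Td) = Td := hp2
  have k3 : star (Td * T) = Td * T := by
    rw [ContinuousLinearMap.star_eq_adjoint]; exact hp3
  have k4 : star (T * Td) = T * Td := by
    rw [ContinuousLinearMap.star_eq_adjoint]; exact hp4
  -- S = S * star Td * S
  have s1 : S = S * star Td * S := by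
    conv_lhs => rw [← hstar, ← k1]
    simp [star_mul, hstar, mul_assoc]
  -- S = Td * T * S  (so range S ≤ range Td)
  have s2 : S = Td * T * S := by
    conv_lhs => rw [← hstar, ← k1]
    rw [star_mul, k3, hstar]
  -- Td = S * star Td * Td  (so range Td ≤ range S)
  have s3 : Td = S * star Td * Td := by
    conv_lhs => rw [← k2]
    have h' : Td * (T * Td) = (Td * T) * Td := by rw [mul_assoc]
    rw [h', ← k3, star_mul, hstar]
  -- star Td = T * Td * star Td  (so range (star Td) ≤ range T)
  have s4 : star Td = T * Td * star Td := by
    conv_lhs => rw [← k2]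
    rw [star_mul, k4]
  constructor
  · intro h
    have hmul : T ^ (m + 1) * Td = Td * T ^ (m + 1) := h
    have hstarmul : star Td * S ^ (m + 1) = S ^ (m + 1) * star Td := by
      have := congrArg star hmul
      rwa [star_mul, star_mul, star_pow, hstar] at this
    constructor
    · -- range (T^(m+1)) ≤ range S
      have key : T ^ (m + 1) = S * (star Td * (Td * T ^ (m + 2))) := by
        have e1 : T ^ (m + 1) = Td * T ^ (m + 2) := by
          calc T ^ (m + 1) = T ^ m * (T * (Td * T)) := by rw [k1, ← pow_succ]
            _ = T ^ (m + 1) * Td * T := by simp [pow_succ, mul_assoc]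
            _ = Td * T ^ (m + 1) * T := by rw [hmul]
            _ = Td * T ^ (m + 2) := by simp [pow_succ, mul_assoc]
        calc T ^ (m + 1) = Td * T ^ (m + 2) := e1
          _ = (S * star Td * Td) * T ^ (m + 2) := by rw [← s3]
          _ = S * (star Td * (Td * T ^ (m + 2))) := by simp [mul_assoc]
      intro x hx
      obtain ⟨y, hy⟩ := hx
      refine ⟨(star Td * (Td * T ^ (m + 2))) y, ?_⟩
      have hk := DFunLike.congr_fun key y
      simp only [ContinuousLinearMap.mul_apply] at hk ⊢
      rw [← hy]
      exact hk.symm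
    · -- range (S^(m+1)) ≤ range T
      have key : S ^ (m + 1) = T * (Td * (star Td * S ^ (m + 2))) := by
        have e1 : S ^ (m + 1) = star Td * S ^ (m + 2) := by
          calc S ^ (m + 1) = S ^ m * (S * star Td * S) := by rw [← s1, ← pow_succ]
            _ = S ^ (m + 1) * star Td * S := by simp [pow_succ, mul_assoc]
            _ = star Td * S ^ (m + 1) * S := by rw [hstarmul]
            _ = star Td * S ^ (m + 2) := by simp [pow_succ, mul_assoc]
        calc S ^ (m + 1) = star Td * S ^ (m + 2) := e1
          _ = (T * Td * star Td) * S ^ (m + 2) := by rw [← s4]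
          _ = T * (Td * (star Td * S ^ (m + 2))) := by simp [mul_assoc]
      intro x hx
      obtain ⟨y, hy⟩ := hx
      refine ⟨(Td * (star Td * S ^ (m + 2))) y, ?_⟩
      have hk := DFunLike.congr_fun key y
      simp only [ContinuousLinearMap.mul_apply] at hk ⊢
      rw [← hy]
      exact hk.symm
  · rintro ⟨h1, h2⟩
    -- claim A : Td * T ^ (m+2) = T ^ (m+1)
    have cA : Td * T ^ (m + 2) = T ^ (m + 1) := by
      ext x
      have hx : (T ^ (m + 1)) x ∈ LinearMap.range (S : H →ₗ[ℂ] H) := h1 ⟨x, rfl⟩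
      obtain ⟨y, hy⟩ := hx
      have hy2 : (T ^ (m + 1)) x = Td (T (S y)) := by
        have hs := DFunLike.congr_fun s2 y
        simp only [ContinuousLinearMap.mul_apply] at hs
        rw [← hy]; exact hs
      have hfix : Td (T (Td (T (S y)))) = Td (T (S y)) := by
        have hk := DFunLike.congr_fun k2 (T (S y))
        simp only [ContinuousLinearMap.mul_apply] at hk
        exact hk
      have lhs_eq : (Td * T ^ (m + 2)) x = Td (T ((T ^ (m + 1)) x)) := by
        have h' : Td * T ^ (m + 2) = Td * (T * T ^ (m + 1)) := by
          rw [← pow_succ']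
        rw [h']
        simp [ContinuousLinearMap.mul_apply]
      simp only [ContinuousLinearMap.mul_apply] at lhs_eq ⊢
      rw [lhs_eq, hy2, hfix]
    -- T * Td * S^(m+1) = S^(m+1)
    have cB0 : T * (Td * S ^ (m + 1)) = S ^ (m + 1) := by
      ext x
      have hx : (S ^ (m + 1)) x ∈ LinearMap.range (T : H →ₗ[ℂ] H) := h2 ⟨x, rfl⟩
      obtain ⟨w, hw⟩ := hx
      have hfix : T (Td (T w)) = T w := by
        have hk := DFunLike.congr_fun k1 w
        simp only [ContinuousLinearMap.mul_apply] at hk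
        exact hk
      simp only [ContinuousLinearMap.mul_apply]
      rw [← hw]; exact hfix
    have hTstar : star (S ^ (m + 1)) = T ^ (m + 1) := by
      rw [star_pow, ← hstar, star_star]
    -- claim B : T^(m+2) * Td = T^(m+1)
    have cB : T ^ (m + 2) * Td = T ^ (m + 1) := by
      have h5 := congrArg star cB0
      rw [star_mul, star_mul, hTstar] at h5
      -- h5 : T^(m+1) * star Td * star T = T^(m+1)
      calc T ^ (m + 2) * Td = T ^ (m + 1) * (T * Td) := by simp [pow_succ, mul_assoc]
        _ = T ^ (m + 1) * star (T * Td) := by rw [k4]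
        _ = T ^ (m + 1) * (star Td * star T) := by rw [star_mul]
        _ = T ^ (m + 1) := by rw [← mul_assoc]; exact h5
    show T ^ (m + 1) * Td = Td * T ^ (m + 1)
    calc T ^ (m + 1) * Td = (Td * T ^ (m + 2)) * Td := by rw [cA]
      _ = Td * (T ^ (m + 2) * Td) := by rw [mul_assoc]
      _ = Td * T ^ (m + 1) := by rw [cB]
end

section
/- Let T be a bounded operator with closed range on a Hilbert space such that Tⁿ also has closed range. If Tⁿ is EP (i.e., range(Tⁿ) = range((Tⁿ)*)), then T is n-EP (TⁿT† = T†Tⁿ). -/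
open ContinuousLinearMap

theorem stmt_7 {H : Type*} [NormedAddCommGroup H] [InnerProductSpace ℂ H] [CompleteSpace H]
    (T Td : H →L[ℂ] H)
    (hclosed : IsClosed (LinearMap.range (T : H →ₗ[ℂ] H) : Set H))
    (hp1 : T ∘L Td ∘L T = T) (hp2 : Td ∘L T ∘L Td = Td)
    (hp3 : ContinuousLinearMap.adjoint (Td ∘L T) = Td ∘L T)
    (hp4 : ContinuousLinearMap.adjoint (T ∘L Td) = T ∘L Td)
    (n : ℕ) (hnclosed : IsClosed (LinearMap.range (((T ^ n)) : H →ₗ[ℂ] H) : Set H))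
    (hEP : LinearMap.range (((T ^ n)) : H →ₗ[ℂ] H) = LinearMap.range ((ContinuousLinearMap.adjoint ((T ^ n)) : H →L[ℂ] H) : H →ₗ[ℂ] H))
    :
    (T ^ n) ∘L Td = Td ∘L (T ^ n) := by
  obtain _ | m := n
  · ext x; simp
  set n := m + 1 with hn
  have hadj : ContinuousLinearMap.adjoint (T ^ n) = (ContinuousLinearMap.adjoint T) ^ n := by
    rw [← ContinuousLinearMap.star_eq_adjoint, ← ContinuousLinearMap.star_eq_adjoint, star_pow]
  -- (Td ∘ T) ∘ T* = T*
  have h1 : (Td ∘L T) ∘L ContinuousLinearMap.adjoint T = ContinuousLinearMap.adjoint T := by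
    have := congrArg ContinuousLinearMap.adjoint hp1
    rwa [ContinuousLinearMap.adjoint_comp, hp3] at this
  -- L1 : (Td ∘ T) ∘ Tⁿ = Tⁿ
  have L1 : (Td ∘L T) ∘L (T ^ n) = T ^ n := by
    ext x
    have hx : (T ^ n) x ∈ LinearMap.range ((ContinuousLinearMap.adjoint (T ^ n) : H →L[ℂ] H) : H →ₗ[ℂ] H) := by
      rw [← hEP]; exact ⟨x, by rw [← ContinuousLinearMap.coe_pow]; rfl⟩
    obtain ⟨y, hy⟩ := hx
    rw [hadj, pow_succ'] at hy
    have : (T ^ n) x = ContinuousLinearMap.adjoint T (((ContinuousLinearMap.adjoint T) ^ m) y) := by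
      rw [← hy]; rfl
    simp only [ContinuousLinearMap.comp_apply, this]
    exact DFunLike.congr_fun h1 _
  -- (T ∘ Td) ∘ (T*)ⁿ = (T*)ⁿ
  have L2' : (T ∘L Td) ∘L ((ContinuousLinearMap.adjoint T) ^ n)
      = (ContinuousLinearMap.adjoint T) ^ n := by
    ext x
    have hx : ((ContinuousLinearMap.adjoint T) ^ n) x ∈ LinearMap.range ((T ^ n : H →L[ℂ] H) : H →ₗ[ℂ] H) := by
      rw [ContinuousLinearMap.coe_pow, hEP, hadj]; exact ⟨x, rfl⟩
    obtain ⟨y, hy⟩ := hx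
    rw [pow_succ'] at hy
    have : ((ContinuousLinearMap.adjoint T) ^ n) x = T ((T ^ m) y) := by rw [← hy]; rfl
    simp only [ContinuousLinearMap.comp_apply, this]
    exact DFunLike.congr_fun hp1 _
  -- L2 : Tⁿ ∘ (T ∘ Td) = Tⁿ
  have L2 : (T ^ n) ∘L (T ∘L Td) = T ^ n := by
    have := congrArg ContinuousLinearMap.adjoint L2'
    rwa [ContinuousLinearMap.adjoint_comp, hp4, ← hadj, ContinuousLinearMap.adjoint_adjoint]
      at this
  have hcomm : T ∘L (T ^ n) = (T ^ n) ∘L T := by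
    have h1' : T * T ^ n = T ^ n * T := by rw [← pow_succ, ← pow_succ']
    exact h1'
  calc (T ^ n) ∘L Td = ((Td ∘L T) ∘L (T ^ n)) ∘L Td := by rw [L1]
    _ = Td ∘L ((T ∘L (T ^ n)) ∘L Td) := by rw [ContinuousLinearMap.comp_assoc,
        ContinuousLinearMap.comp_assoc, ContinuousLinearMap.comp_assoc]
    _ = Td ∘L (((T ^ n) ∘L T) ∘L Td) := by rw [hcomm]
    _ = Td ∘L ((T ^ n) ∘L (T ∘L Td)) := by rw [ContinuousLinearMap.comp_assoc]
    _ = Td ∘L (T ^ n) := by rw [L2]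
end

section
/- Let T be a bounded operator with closed range on a Hilbert space that is SD, i.e., T* commutes with T†. Then T is n-EP (TⁿT† = T†Tⁿ) if and only if T is n-normal (TⁿT* = T*Tⁿ). -/
/-- Abstract monoid computation underlying the SD / n-EP / n-normal equivalence. -/
lemma sd_aux {M : Type*} [Monoid M] (T Td S E a : M)
    (h2 : Td * T * Td = Td)
    (hQ : Td * T = S * E) (hP : T * Td = E * S)
    (hQTs : Td * (T * S) = S) (hTsP : S * (T * Td) = S)
    (haT : a * T = T * a) (haE : E * a = a * E) :
    a * Td = Td * a ↔ a * S = S * a := by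
  constructor
  · intro hyp
    calc a * S = a * (Td * (T * S)) := by rw [hQTs]
      _ = a * Td * (T * S) := by rw [mul_assoc]
      _ = Td * a * (T * S) := by rw [hyp]
      _ = Td * (a * T) * S := by simp only [mul_assoc]
      _ = Td * (T * a) * S := by rw [haT]
      _ = Td * T * (a * S) := by simp only [mul_assoc]
      _ = S * E * (a * S) := by rw [hQ]
      _ = S * (E * a) * S := by simp only [mul_assoc]
      _ = S * (a * E) * S := by rw [haE]
      _ = S * a * (E * S) := by simp only [mul_assoc]
      _ = S * a * (T * Td) := by rw [hP]
      _ = S * (a * T) * Td := by simp only [mul_assoc]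
      _ = S * (T * a) * Td := by rw [haT]
      _ = S * T * (a * Td) := by simp only [mul_assoc]
      _ = S * T * (Td * a) := by rw [hyp]
      _ = S * (T * Td) * a := by simp only [mul_assoc]
      _ = S * a := by rw [hTsP]
  · intro hyp
    have e1 : a * Td = Td * (a * (T * Td)) := by
      calc a * Td = a * (Td * T * Td) := by rw [h2]
        _ = a * (S * E * Td) := by rw [hQ]
        _ = a * S * (E * Td) := by simp only [mul_assoc]
        _ = S * a * (E * Td) := by rw [hyp]
        _ = S * (a * E) * Td := by simp only [mul_assoc]
        _ = S * (E * a) * Td := by rw [haE]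
        _ = S * E * (a * Td) := by simp only [mul_assoc]
        _ = Td * T * (a * Td) := by rw [hQ]
        _ = Td * (T * a) * Td := by simp only [mul_assoc]
        _ = Td * (a * T) * Td := by rw [haT]
        _ = Td * (a * (T * Td)) := by simp only [mul_assoc]
    have e2 : Td * a = Td * (a * (T * Td)) := by
      calc Td * a = Td * T * Td * a := by rw [h2]
        _ = Td * (T * Td) * a := by simp only [mul_assoc]
        _ = Td * (E * S) * a := by rw [hP]
        _ = Td * E * (S * a) := by simp only [mul_assoc]
        _ = Td * E * (a * S) := by rw [hyp]
        _ = Td * (E * a) * S := by simp only [mul_assoc]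
        _ = Td * (a * E) * S := by rw [haE]
        _ = Td * (a * (E * S)) := by simp only [mul_assoc]
        _ = Td * (a * (T * Td)) := by rw [hP]
    rw [e1, e2]

theorem stmt_9 {H : Type*} [NormedAddCommGroup H] [InnerProductSpace ℂ H] [CompleteSpace H]
    (T Td : H →L[ℂ] H)
    (hclosed : IsClosed ((LinearMap.range (T : H →ₗ[ℂ] H) : Submodule ℂ H) : Set H))
    (hp1 : T ∘L Td ∘L T = T) (hp2 : Td ∘L T ∘L Td = Td)
    (hp3 : ContinuousLinearMap.adjoint (Td ∘L T) = Td ∘L T)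
    (hp4 : ContinuousLinearMap.adjoint (T ∘L Td) = T ∘L Td)
    (n : ℕ) (hSD : ContinuousLinearMap.adjoint T ∘L Td = Td ∘L ContinuousLinearMap.adjoint T)
    :
    (T ^ n) ∘L Td = Td ∘L (T ^ n) ↔ (T ^ n) ∘L ContinuousLinearMap.adjoint T = ContinuousLinearMap.adjoint T ∘L (T ^ n) := by
  set S := ContinuousLinearMap.adjoint T with hS
  set E := ContinuousLinearMap.adjoint Td with hE
  -- switch from ∘L to *
  have mul_def : ∀ f g : H →L[ℂ] H, f ∘L g = f * g := fun f g => rfl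
  simp only [mul_def] at hp1 hp2 hp3 hp4 hSD ⊢
  have hadj : ∀ f g : H →L[ℂ] H,
      ContinuousLinearMap.adjoint (f * g)
        = ContinuousLinearMap.adjoint g * ContinuousLinearMap.adjoint f := by
    intro f g
    rw [← mul_def, ContinuousLinearMap.adjoint_comp, mul_def]
  have hadj_adj : ContinuousLinearMap.adjoint S = T := by
    rw [hS, ContinuousLinearMap.adjoint_adjoint]
  -- basic identities
  have hQ : Td * T = S * E := by
    conv_lhs => rw [← hp3]
    rw [hadj]
  have hP : T * Td = E * S := by
    conv_lhs => rw [← hp4]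
    rw [hadj]
  have hQTs : Td * (T * S) = S := by
    have h := hadj T (Td * T)
    rw [hp1, hp3, ← hS] at h
    rw [← mul_assoc, ← h]
  have hTsP : S * (T * Td) = S := by
    have h := hadj (T * Td) T
    rw [hp4, ← hS, mul_assoc, hp1, ← hS] at h
    rw [← h]
  have hET : E * T = T * E := by
    have h := congrArg ContinuousLinearMap.adjoint hSD
    rw [hadj, hadj, hadj_adj, ← hE] at h
    exact h
  have haE : E * T ^ n = T ^ n * E := (Commute.pow_right (hET) n)
  have haT : T ^ n * T = T * T ^ n := ((Commute.refl T).pow_left n)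
  have h2 : Td * T * Td = Td := by rw [mul_assoc, hp2]
  exact sd_aux T Td S E (T ^ n) h2 hQ hP hQTs hTsP haT haE
end

section
/- A bounded operator T with closed range on a Hilbert space is normal if and only if T is both EP (range(T) = range(T*)) and SD (T* commutes with T†). -/
theorem stmt_12 {H : Type*} [NormedAddCommGroup H] [InnerProductSpace ℂ H] [CompleteSpace H]
    (T Td : H →L[ℂ] H)
    (hclosed : IsClosed (LinearMap.range (T : H →ₗ[ℂ] H) : Set H))
    (hp1 : T ∘L Td ∘L T = T) (hp2 : Td ∘L T ∘L Td = Td)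
    (hp3 : ContinuousLinearMap.adjoint (Td ∘L T) = Td ∘L T)
    (hp4 : ContinuousLinearMap.adjoint (T ∘L Td) = T ∘L Td)
    :
    ContinuousLinearMap.adjoint T ∘L T = T ∘L ContinuousLinearMap.adjoint T ↔ (LinearMap.range (T : H →ₗ[ℂ] H) = LinearMap.range (ContinuousLinearMap.adjoint T : H →ₗ[ℂ] H) ∧ ContinuousLinearMap.adjoint T ∘L Td = Td ∘L ContinuousLinearMap.adjoint T) := by
  set S := ContinuousLinearMap.adjoint T with hSdef
  have hsT : star T = S := ContinuousLinearMap.star_eq_adjoint T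
  -- basic Moore-Penrose identities, in `*` form
  have hTQ : T * (Td * T) = T := hp1
  have hTdP : Td * (T * Td) = Td := hp2
  have sQ : star (Td * T) = Td * T := by
    rw [ContinuousLinearMap.star_eq_adjoint]; exact hp3
  have sP : star (T * Td) = T * Td := by
    rw [ContinuousLinearMap.star_eq_adjoint]; exact hp4
  have hPT : (T * Td) * T = T := by rw [mul_assoc]; exact hTQ
  have hQTd : (Td * T) * Td = Td := by rw [mul_assoc]; exact hTdP
  have hQS : (Td * T) * S = S := by
    have h := congrArg star hTQ
    rwa [star_mul, sQ, hsT] at h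
  have hSP : S * (T * Td) = S := by
    have h := congrArg star hPT
    rwa [star_mul, sP, hsT] at h
  have hQalt : Td * T = S * star Td := by
    rw [← sQ, star_mul, hsT]
  have hPalt : T * Td = star Td * S := by
    rw [← sP, star_mul, hsT]
  constructor
  · intro hN
    have hN' : S * T = T * S := hN
    -- kernels of T and S coincide
    have kerTS : ∀ x : H, T x = 0 ↔ S x = 0 := by
      intro x
      have key : (inner ℂ (T x) (T x) : ℂ) = inner ℂ (S x) (S x) := by
        calc (inner ℂ (T x) (T x) : ℂ)
            = inner ℂ (S (T x)) x := (ContinuousLinearMap.adjoint_inner_left T x (T x)).symm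
          _ = inner ℂ ((S * T) x) x := rfl
          _ = inner ℂ ((T * S) x) x := by rw [hN']
          _ = inner ℂ (T (S x)) x := rfl
          _ = inner ℂ (S x) (S x) := (ContinuousLinearMap.adjoint_inner_right T (S x) x).symm
      constructor
      · intro h
        have : (inner ℂ (S x) (S x) : ℂ) = 0 := by rw [← key, h]; simp
        exact inner_self_eq_zero.mp this
      · intro h
        have : (inner ℂ (T x) (T x) : ℂ) = 0 := by rw [key, h]; simp
        exact inner_self_eq_zero.mp this
    -- P := T*Td and Q := Td*T coincide
    have hPQcomp : (T * Td) * (Td * T) = T * Td := by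
      ext x
      have hz : T (x - (Td * T) x) = 0 := by
        rw [map_sub, sub_eq_zero]
        exact (DFunLike.congr_fun hTQ x).symm
      have hz2 : S (x - (Td * T) x) = 0 := (kerTS _).mp hz
      have hz3 : (T * Td) (x - (Td * T) x) = 0 := by
        rw [hPalt]
        show star Td (S (x - (Td * T) x)) = 0
        rw [hz2, map_zero]
      rw [map_sub, sub_eq_zero] at hz3
      exact hz3.symm
    have hQPcomp : (Td * T) * (T * Td) = Td * T := by
      ext x
      have hz : S (x - (T * Td) x) = 0 := by
        rw [map_sub, sub_eq_zero]
        exact (DFunLike.congr_fun hSP x).symm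
      have hz2 : T (x - (T * Td) x) = 0 := (kerTS _).mpr hz
      have hz3 : (Td * T) (x - (T * Td) x) = 0 := by
        show Td (T (x - (T * Td) x)) = 0
        rw [hz2, map_zero]
      rw [map_sub, sub_eq_zero] at hz3
      exact hz3.symm
    have hPQ : T * Td = Td * T := by
      calc T * Td = star (T * Td) := sP.symm
        _ = star ((T * Td) * (Td * T)) := by rw [hPQcomp]
        _ = star (Td * T) * star (T * Td) := star_mul _ _
        _ = (Td * T) * (T * Td) := by rw [sQ, sP]
        _ = Td * T := hQPcomp
    constructor
    · -- EP : range T = range S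
      ext x
      simp only [LinearMap.mem_range]
      constructor
      · rintro ⟨y, rfl⟩
        refine ⟨star Td (T y), ?_⟩
        have h1 : (S : H →ₗ[ℂ] H) (star Td (T y)) = (S * star Td) (T y) := rfl
        rw [h1, ← hQalt]
        show (Td * T) (T y) = T y
        rw [← hPQ]
        show (T * Td) (T y) = T y
        exact DFunLike.congr_fun hPT y
      · rintro ⟨y, rfl⟩
        refine ⟨Td (S y), ?_⟩
        show (T * Td) (S y) = S y
        rw [hPQ]
        exact DFunLike.congr_fun hQS y
    · -- SD : S * Td = Td * S
      show S * Td = Td * S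
      calc S * Td = ((Td * T) * S) * Td := by rw [hQS]
        _ = (Td * (T * S)) * Td := by rw [mul_assoc Td T S]
        _ = (Td * (S * T)) * Td := by rw [hN']
        _ = ((Td * S) * T) * Td := by rw [mul_assoc Td S T]
        _ = (Td * S) * (T * Td) := mul_assoc _ _ _
        _ = Td * (S * (T * Td)) := mul_assoc _ _ _
        _ = Td * S := by rw [hSP]
  · rintro ⟨hEP, hSD⟩
    have hSD' : S * Td = Td * S := hSD
    -- P = Q from range equality
    have hPQcomp : ∀ x : H, (T * Td) ((Td * T) x) = (Td * T) x := by
      intro x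
      have hmem : (Td * T) x ∈ LinearMap.range (T : H →ₗ[ℂ] H) := by
        rw [hEP]
        refine ⟨star Td x, ?_⟩
        show S (star Td x) = (Td * T) x
        rw [hQalt]; rfl
      obtain ⟨y, hy⟩ := hmem
      rw [← hy]
      exact DFunLike.congr_fun hPT y
    have hQPcomp : ∀ x : H, (Td * T) ((T * Td) x) = (T * Td) x := by
      intro x
      have hmem : (T * Td) x ∈ LinearMap.range (S : H →ₗ[ℂ] H) := by
        rw [← hEP]
        refine ⟨Td x, rfl⟩
      obtain ⟨y, hy⟩ := hmem
      have hy' : S y = (T * Td) x := hy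
      rw [← hy']
      exact DFunLike.congr_fun hQS y
    have hPQc : (T * Td) * (Td * T) = Td * T := by
      ext x; exact hPQcomp x
    have hQPc : (Td * T) * (T * Td) = T * Td := by
      ext x; exact hQPcomp x
    have hPQ : T * Td = Td * T := by
      calc T * Td = star (T * Td) := sP.symm
        _ = star ((Td * T) * (T * Td)) := by rw [hQPc]
        _ = star (T * Td) * star (Td * T) := star_mul _ _
        _ = (T * Td) * (Td * T) := by rw [sQ, sP]
        _ = Td * T := hPQc
    show S * T = T * S
    calc S * T = ((Td * T) * S) * T := by rw [hQS]
      _ = (((T * Td)) * S) * T := by rw [← hPQ]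
      _ = (T * (Td * S)) * T := by rw [mul_assoc T Td S]
      _ = (T * (S * Td)) * T := by rw [hSD']
      _ = ((T * S) * Td) * T := by rw [mul_assoc T S Td]
      _ = (T * S) * (Td * T) := mul_assoc _ _ _
      _ = (T * S) * (T * Td) := by rw [← hPQ]
      _ = T * (S * (T * Td)) := mul_assoc _ _ _
      _ = T * S := by rw [hSP]
end

section
/- Every quasi-normal bounded operator with closed range on a Hilbert space (i.e., T(T*T) = (T*T)T) is SD, that is, T* commutes with T†. -/
theorem stmt_13 {H : Type*} [NormedAddCommGroup H] [InnerProductSpace ℂ H] [CompleteSpace H]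
    (T Td : H →L[ℂ] H)
    (hclosed : IsClosed (LinearMap.range (T : H →ₗ[ℂ] H) : Set H))
    (hp1 : T ∘L Td ∘L T = T) (hp2 : Td ∘L T ∘L Td = Td)
    (hp3 : ContinuousLinearMap.adjoint (Td ∘L T) = Td ∘L T)
    (hp4 : ContinuousLinearMap.adjoint (T ∘L Td) = T ∘L Td)
    (hq : T ∘L (ContinuousLinearMap.adjoint T ∘L T) = (ContinuousLinearMap.adjoint T ∘L T) ∘L T)
    :
    ContinuousLinearMap.adjoint T ∘L Td = Td ∘L ContinuousLinearMap.adjoint T := by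
  set T' := ContinuousLinearMap.adjoint T with hT'def
  set Ts := ContinuousLinearMap.adjoint Td with hTsdef
  -- pointwise Moore-Penrose facts
  have e1 : ∀ x, T (Td (T x)) = T x := fun x => ContinuousLinearMap.ext_iff.mp hp1 x
  have e2 : ∀ x, Td (T (Td x)) = Td x := fun x => ContinuousLinearMap.ext_iff.mp hp2 x
  have eq1 : ∀ x, T (T' (T x)) = T' (T (T x)) := fun x => ContinuousLinearMap.ext_iff.mp hq x
  -- inner product moves
  have hTinner : ∀ a b : H, (inner ℂ (T a) b : ℂ) = inner ℂ a (T' b) := fun a b =>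
    (ContinuousLinearMap.adjoint_inner_right T a b).symm
  have hT'inner : ∀ a b : H, (inner ℂ (T' a) b : ℂ) = inner ℂ a (T b) := fun a b =>
    ContinuousLinearMap.adjoint_inner_left T b a
  -- hp4 pointwise : Ts (T' x) = T (Td x)
  have f4 : ∀ x, Ts (T' x) = T (Td x) := by
    intro x
    have h : Ts ∘L T' = T ∘L Td := by
      rw [hTsdef, hT'def, ← ContinuousLinearMap.adjoint_comp, hp4]
    exact ContinuousLinearMap.ext_iff.mp h x
  -- hp3 pointwise : T' (Ts x) = Td (T x)
  have f3 : ∀ x, T' (Ts x) = Td (T x) := by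
    intro x
    have h : T' ∘L Ts = Td ∘L T := by
      rw [hTsdef, hT'def, ← ContinuousLinearMap.adjoint_comp, hp3]
    exact ContinuousLinearMap.ext_iff.mp h x
  -- Q = Td ∘ T is self-adjoint, pointwise
  have hQinner : ∀ a b : H, (inner ℂ (Td (T a)) b : ℂ) = inner ℂ a (Td (T b)) := by
    intro a b
    have h := ContinuousLinearMap.adjoint_inner_left (Td ∘L T) b a
    rw [hp3] at h
    simpa using h
  -- kernel inclusion : T z = 0 → T' z = 0
  have hker : ∀ z, T z = 0 → T' z = 0 := by
    intro z hz
    have hB : T (T' z) = 0 := by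
      have h1 : (inner ℂ (T (T' z)) (T (T' z)) : ℂ) = 0 := by
        calc (inner ℂ (T (T' z)) (T (T' z)) : ℂ)
            = inner ℂ (T' z) (T' (T (T' z))) := hTinner _ _
          _ = inner ℂ z (T (T' (T (T' z)))) := hT'inner _ _
          _ = inner ℂ z (T' (T (T (T' z)))) := by rw [eq1 (T' z)]
          _ = inner ℂ (T z) (T (T (T' z))) := (hTinner _ _).symm
          _ = 0 := by rw [hz]; exact inner_zero_left _
      exact inner_self_eq_zero.mp h1
    have h2 : (inner ℂ (T' z) (T' z) : ℂ) = 0 := by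
      calc (inner ℂ (T' z) (T' z) : ℂ) = inner ℂ z (T (T' z)) := hT'inner _ _
        _ = 0 := by rw [hB]; exact inner_zero_right _
    exact inner_self_eq_zero.mp h2
  -- range T ⊆ range T* : Td (T (T x)) = T x
  have qT : ∀ x, Td (T (T x)) = T x := by
    intro x
    set z := T x - Td (T (T x)) with hzdef
    have hTz : T z = 0 := by
      have h := e1 (T x)
      simp [hzdef, map_sub, h]
    have hT'z : T' z = 0 := hker z hTz
    have t1 : (inner ℂ (T x) z : ℂ) = 0 := by
      rw [hTinner x z, hT'z]; exact inner_zero_right _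
    have t2 : (inner ℂ (Td (T (T x))) z : ℂ) = 0 := by
      rw [hQinner (T x) z, hTz]
      simp
    have hzz : (inner ℂ z z : ℂ) = 0 := by
      calc (inner ℂ z z : ℂ) = inner ℂ (T x - Td (T (T x))) z := by rw [hzdef]
        _ = inner ℂ (T x) z - inner ℂ (Td (T (T x))) z := inner_sub_left _ _ _
        _ = 0 := by rw [t1, t2]; ring
    have hz0 : z = 0 := inner_self_eq_zero.mp hzz
    have := sub_eq_zero.mp (hzdef ▸ hz0)
    exact this.symm
  -- Td = C ∘ T' where C = Td ∘ Ts
  have hTdC : ∀ x, Td x = Td (Ts (T' x)) := by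
    intro x
    rw [f4 x, e2 x]
  -- A ∘ C = Q pointwise
  have hAC : ∀ x, T' (T (Td (Ts x))) = Td (T x) := by
    intro x
    have h : T ∘L Td = Ts ∘L T' := by
      rw [← hp4, ContinuousLinearMap.adjoint_comp, hT'def, hTsdef]
    have h1 : T (Td (Ts x)) = Ts (T' (Ts x)) := ContinuousLinearMap.ext_iff.mp h (Ts x)
    rw [h1, f3 x, f3 (Td (T x)), e2 (T x)]
  -- C ∘ A = Q pointwise
  have hCA : ∀ x, Td (Ts (T' (T x))) = Td (T x) := by
    intro x
    rw [f4 (T x), e2 (T x)]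
  -- T commutes with C
  have hTC : ∀ x, T (Td (Ts x)) = Td (Ts (T x)) := by
    intro x
    calc T (Td (Ts x)) = Td (T (T (Td (Ts x)))) := (qT _).symm
      _ = Td (Ts (T' (T (T (Td (Ts x)))))) := (hCA _).symm
      _ = Td (Ts (T (T' (T (Td (Ts x)))))) := by rw [eq1 (Td (Ts x))]
      _ = Td (Ts (T (Td (T x)))) := by rw [hAC x]
      _ = Td (Ts (T x)) := by rw [e1 x]
  have hTCop : T ∘L (Td ∘L Ts) = (Td ∘L Ts) ∘L T := by
    ext x; simpa using hTC x
  have hCadj : ContinuousLinearMap.adjoint (Td ∘L Ts) = Td ∘L Ts := by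
    rw [ContinuousLinearMap.adjoint_comp, hTsdef, ContinuousLinearMap.adjoint_adjoint]
  -- T' commutes with C
  have hT'C : ∀ x, T' (Td (Ts x)) = Td (Ts (T' x)) := by
    have h : (Td ∘L Ts) ∘L T' = T' ∘L (Td ∘L Ts) := by
      calc (Td ∘L Ts) ∘L T'
          = ContinuousLinearMap.adjoint (T ∘L (Td ∘L Ts)) := by
            rw [ContinuousLinearMap.adjoint_comp, hCadj, ← hT'def]
        _ = ContinuousLinearMap.adjoint ((Td ∘L Ts) ∘L T) := by rw [hTCop]
        _ = T' ∘L (Td ∘L Ts) := by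
            rw [ContinuousLinearMap.adjoint_comp, hCadj, ← hT'def]
    intro x
    have := ContinuousLinearMap.ext_iff.mp h x
    simpa using this.symm
  -- conclusion
  ext x
  show T' (Td x) = Td (T' x)
  calc T' (Td x) = T' (Td (Ts (T' x))) := by rw [← hTdC x]
    _ = Td (Ts (T' (T' x))) := hT'C (T' x)
    _ = Td (T' x) := (hTdC (T' x)).symm
end

section
/- Let T be a hypo-EP bounded operator with closed range on a Hilbert space (range(T) ⊆ range(T*)). Then TT† commutes with T + T* if and only if T is EP (range(T) = range(T*)). -/
theorem stmt_15 {H : Type*} [NormedAddCommGroup H] [InnerProductSpace ℂ H] [CompleteSpace H]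
    (T Td : H →L[ℂ] H)
    (hclosed : IsClosed (LinearMap.range (T : H →ₗ[ℂ] H) : Set H))
    (hp1 : T ∘L Td ∘L T = T) (hp2 : Td ∘L T ∘L Td = Td)
    (hp3 : ContinuousLinearMap.adjoint (Td ∘L T) = Td ∘L T)
    (hp4 : ContinuousLinearMap.adjoint (T ∘L Td) = T ∘L Td)
    (hhypo : LinearMap.range (T : H →ₗ[ℂ] H) ≤ LinearMap.range (ContinuousLinearMap.adjoint T : H →ₗ[ℂ] H))
    :
    (T ∘L Td) ∘L (T + ContinuousLinearMap.adjoint T) = (T + ContinuousLinearMap.adjoint T) ∘L (T ∘L Td) ↔ LinearMap.range (T : H →ₗ[ℂ] H) = LinearMap.range (ContinuousLinearMap.adjoint T : H →ₗ[ℂ] H) := by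
  set S := ContinuousLinearMap.adjoint T with hS
  set P := T ∘L Td with hP
  have hPT : P ∘L T = T := by rw [hP, ContinuousLinearMap.comp_assoc]; exact hp1
  have hPP : P ∘L P = P := by
    conv_lhs => rw [hP, ← ContinuousLinearMap.comp_assoc, ← hP, hPT]
  have hSP : S ∘L P = S := by
    have h1 := congrArg ContinuousLinearMap.adjoint hPT
    rwa [ContinuousLinearMap.adjoint_comp, hp4, ← hS] at h1
  constructor
  · intro h
    rw [ContinuousLinearMap.comp_add, ContinuousLinearMap.add_comp, hPT, hSP] at h
    -- h : T + P ∘L S = T ∘L P + S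
    set A := T - T ∘L P with hA
    have key : T - T ∘L P = S - P ∘L S := by
      rw [sub_eq_sub_iff_add_eq_add, h, add_comm]
    have hadj : ContinuousLinearMap.adjoint A = S - P ∘L S := by
      rw [hA, map_sub, ContinuousLinearMap.adjoint_comp, hp4, ← hS]
    have hAself : ContinuousLinearMap.adjoint A = A := by rw [hadj, ← key, ← hA]
    have hPA : P ∘L A = A := by
      rw [hA, ContinuousLinearMap.comp_sub, hPT, ← ContinuousLinearMap.comp_assoc, hPT]
    have hAP : A ∘L P = 0 := by
      rw [hA, ContinuousLinearMap.sub_comp, ContinuousLinearMap.comp_assoc, hPP, sub_self]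
    have hA0 : A = 0 := by
      have h1 := congrArg ContinuousLinearMap.adjoint hPA
      rw [ContinuousLinearMap.adjoint_comp, hp4, hAself] at h1
      rw [← h1, hAP]
    have hTP : T ∘L P = T := by
      rw [hA] at hA0
      exact (sub_eq_zero.mp hA0).symm
    have hPS : P ∘L S = S := by
      have h1 := congrArg ContinuousLinearMap.adjoint hTP
      rwa [ContinuousLinearMap.adjoint_comp, hp4, ← hS] at h1
    refine le_antisymm hhypo ?_
    rintro y ⟨x, rfl⟩
    have hPS' := ContinuousLinearMap.ext_iff.mp hPS x
    rw [ContinuousLinearMap.comp_apply, hP, ContinuousLinearMap.comp_apply] at hPS'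
    exact ⟨Td (S x), hPS'⟩
  · intro h
    have hPS : P ∘L S = S := by
      ext x
      have hx : S x ∈ LinearMap.range (T : H →ₗ[ℂ] H) := by rw [h]; exact ⟨x, rfl⟩
      obtain ⟨z, hz⟩ := hx
      show (P ∘L S) x = S x
      rw [ContinuousLinearMap.comp_apply, ← hz, ContinuousLinearMap.coe_coe, ← ContinuousLinearMap.comp_apply, hPT]
    have hTP : T ∘L P = T := by
      have h1 := congrArg ContinuousLinearMap.adjoint hPS
      rwa [ContinuousLinearMap.adjoint_comp, hp4, hS,
        ContinuousLinearMap.adjoint_adjoint] at h1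
    rw [ContinuousLinearMap.comp_add, ContinuousLinearMap.add_comp, hPT, hSP, hTP, hPS]
end

section
/- Let T be a bounded operator with closed range on a Hilbert space such that T†T commutes with T + T*. Then T is hypo-EP, i.e., range(T) ⊆ range(T*). -/
open ContinuousLinearMap

theorem stmt_16 {H : Type*} [NormedAddCommGroup H] [InnerProductSpace ℂ H] [CompleteSpace H]
    (T Td : H →L[ℂ] H)
    (hclosed : IsClosed (LinearMap.range (T : H →ₗ[ℂ] H) : Set H))
    (hp1 : T ∘L Td ∘L T = T) (hp2 : Td ∘L T ∘L Td = Td)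
    (hp3 : ContinuousLinearMap.adjoint (Td ∘L T) = Td ∘L T)
    (hp4 : ContinuousLinearMap.adjoint (T ∘L Td) = T ∘L Td)
    (hcomm : (Td ∘L T) ∘L (T + ContinuousLinearMap.adjoint T) = (T + ContinuousLinearMap.adjoint T) ∘L (Td ∘L T))
    :
    LinearMap.range (T : H →ₗ[ℂ] H) ≤ LinearMap.range (ContinuousLinearMap.adjoint T : H →ₗ[ℂ] H) := by
  set P : H →L[ℂ] H := Td ∘L T with hPdef
  set S : H →L[ℂ] H := ContinuousLinearMap.adjoint T with hSdef
  have hTP : T ∘L P = T := by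
    rw [hPdef, ← ContinuousLinearMap.comp_assoc]; exact hp1
  have hPP : P ∘L P = P := by
    ext x
    have := congrArg (fun f : H →L[ℂ] H => f (T x)) hp2
    simpa [hPdef, ContinuousLinearMap.comp_apply] using this
  have hPS : P ∘L S = S := by
    have h := congrArg ContinuousLinearMap.adjoint hTP
    rw [ContinuousLinearMap.adjoint_comp, hp3] at h
    exact h
  have hcomm' : P ∘L T + S = T + S ∘L P := by
    have h := hcomm
    rw [ContinuousLinearMap.comp_add, ContinuousLinearMap.add_comp] at h
    rw [hPS, hTP] at h
    exact h
  have hA : P ∘L T - T = S ∘L P - S := by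
    rw [sub_eq_sub_iff_add_eq_add, hcomm']
    exact add_comm _ _
  have hAP : (P ∘L T - T) ∘L P = 0 := by
    rw [hA, ContinuousLinearMap.sub_comp, ContinuousLinearMap.comp_assoc, hPP, sub_self]
  have hAPA : (P ∘L T - T) ∘L P = P ∘L T - T := by
    rw [ContinuousLinearMap.sub_comp, ContinuousLinearMap.comp_assoc, hTP]
  have hPT : P ∘L T = T := by
    have h := hAP
    rw [hAPA] at h
    exact sub_eq_zero.mp h
  have h2 : P = S ∘L ContinuousLinearMap.adjoint Td := by
    rw [← hp3, hPdef, ContinuousLinearMap.adjoint_comp, hSdef]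
  rintro y ⟨x, rfl⟩
  refine ⟨(ContinuousLinearMap.adjoint Td) (T x), ?_⟩
  calc S ((ContinuousLinearMap.adjoint Td) (T x))
      = (S ∘L ContinuousLinearMap.adjoint Td) (T x) := rfl
    _ = P (T x) := by rw [← h2]
    _ = (P ∘L T) x := rfl
    _ = T x := by rw [hPT]
end

section
/- Let T be a bounded operator with closed range on a Hilbert space and n ≥ 1. The following are equivalent: (1) range(Tⁿ) ⊆ range(T*) (T is n-hypo-EP); (2) Tⁿ = T†Tⁿ⁺¹; (3) TⁿT† = T†Tⁿ⁺¹T†; (4) (T*)ⁿ = (T*)ⁿT†T; (5) there exists c ≥ 0 such that ‖(T*)ⁿx‖ ≤ c‖Tx‖ for all x ∈ H. -/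
theorem stmt_17 {H : Type*} [NormedAddCommGroup H] [InnerProductSpace ℂ H] [CompleteSpace H]
    (T Td : H →L[ℂ] H)
    (hclosed : IsClosed (LinearMap.range (T : H →ₗ[ℂ] H) : Set H))
    (hp1 : T ∘L Td ∘L T = T) (hp2 : Td ∘L T ∘L Td = Td)
    (hp3 : ContinuousLinearMap.adjoint (Td ∘L T) = Td ∘L T)
    (hp4 : ContinuousLinearMap.adjoint (T ∘L Td) = T ∘L Td)
    (n : ℕ) (hn : 1 ≤ n)
    :
    ((LinearMap.range (((T ^ n : H →L[ℂ] H) : H →ₗ[ℂ] H)) ≤ LinearMap.range (ContinuousLinearMap.adjoint T : H →ₗ[ℂ] H)) ↔ (T ^ n) = Td ∘L (T ^ (n + 1))) ∧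
    ((LinearMap.range (((T ^ n : H →L[ℂ] H) : H →ₗ[ℂ] H)) ≤ LinearMap.range (ContinuousLinearMap.adjoint T : H →ₗ[ℂ] H)) ↔ (T ^ n) ∘L Td = Td ∘L (T ^ (n + 1)) ∘L Td) ∧
    ((LinearMap.range (((T ^ n : H →L[ℂ] H) : H →ₗ[ℂ] H)) ≤ LinearMap.range (ContinuousLinearMap.adjoint T : H →ₗ[ℂ] H)) ↔ ((ContinuousLinearMap.adjoint T) ^ n) = ((ContinuousLinearMap.adjoint T) ^ n) ∘L Td ∘L T) ∧
    ((LinearMap.range (((T ^ n : H →L[ℂ] H) : H →ₗ[ℂ] H)) ≤ LinearMap.range (ContinuousLinearMap.adjoint T : H →ₗ[ℂ] H)) ↔ ∃ c : ℝ, 0 ≤ c ∧ ∀ x : H, ‖(((ContinuousLinearMap.adjoint T) ^ n)) x‖ ≤ c * ‖T x‖) := by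
  set A := ContinuousLinearMap.adjoint T with hA
  set P := Td ∘L T with hPdef
  have hp1' : ∀ x, T (Td (T x)) = T x := by
    intro x
    have := ContinuousLinearMap.ext_iff.mp hp1 x
    simpa [hPdef] using this
  have hp2' : ∀ x, Td (T (Td x)) = Td x := by
    intro x
    have := ContinuousLinearMap.ext_iff.mp hp2 x
    simpa using this
  -- P is idempotent
  have hPP : ∀ x, P (P x) = P x := by
    intro x
    simp only [hPdef, ContinuousLinearMap.comp_apply]
    rw [hp2']
  -- T ∘ P = T
  have hTP : T ∘L P = T := by
    ext x
    simp only [hPdef, ContinuousLinearMap.comp_apply]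
    exact hp1' x
  -- P ∘ A = A  (adjoint of hTP)
  have hPA : P ∘L A = A := by
    have := congrArg ContinuousLinearMap.adjoint hTP
    rw [ContinuousLinearMap.adjoint_comp, hp3] at this
    rw [← hA] at this
    exact this
  -- range P ⊆ range A : P = A ∘ (adjoint Td)
  have hPE : P = A ∘L ContinuousLinearMap.adjoint Td := by
    rw [← hp3, hPdef, ContinuousLinearMap.adjoint_comp, hA]
  -- adjoint (T^n) = A^n
  have hadjpow : ContinuousLinearMap.adjoint (T ^ n) = A ^ n := by
    rw [hA, ← ContinuousLinearMap.star_eq_adjoint, star_pow, ContinuousLinearMap.star_eq_adjoint]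
  -- Td ∘ T^(n+1) = P ∘ T^n
  have hcomp : Td ∘L T ^ (n + 1) = P ∘L T ^ n := by
    have : T ^ (n + 1) = T ∘L (T ^ n : H →L[ℂ] H) := by
      rw [pow_succ']; rfl
    rw [this, hPdef, ← ContinuousLinearMap.comp_assoc]
  -- T^(k+1) ∘ P = T^(k+1)
  have hTkP : ∀ k : ℕ, (T ^ (k + 1) : H →L[ℂ] H) ∘L P = T ^ (k + 1) := by
    intro k
    have h1 : (T ^ (k + 1) : H →L[ℂ] H) = (T ^ k : H →L[ℂ] H) ∘L T := by
      rw [pow_succ]; rfl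
    rw [h1, ContinuousLinearMap.comp_assoc, hTP]
  -- T^n ∘ P = T^n  (uses n ≥ 1)
  have hTnP : (T ^ n : H →L[ℂ] H) ∘L P = T ^ n := by
    obtain ⟨m, rfl⟩ := Nat.exists_eq_add_of_le hn
    rw [add_comm 1 m]
    exact hTkP m
  -- condition (1) ↔ pointwise projection condition
  have h1P : (LinearMap.range (((T ^ n : H →L[ℂ] H) : H →ₗ[ℂ] H)) ≤ LinearMap.range (A : H →ₗ[ℂ] H)) ↔ ∀ x, P ((T ^ n) x) = (T ^ n) x := by
    constructor
    · intro hr x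
      obtain ⟨y, hy⟩ := hr ⟨x, rfl⟩
      simp only [ContinuousLinearMap.coe_coe] at hy
      rw [← hy]
      have := ContinuousLinearMap.ext_iff.mp hPA y
      simpa using this
    · intro h z hz
      obtain ⟨x, hx⟩ := hz
      refine ⟨ContinuousLinearMap.adjoint Td ((T ^ n) x), ?_⟩
      have : P ((T ^ n) x) = A (ContinuousLinearMap.adjoint Td ((T ^ n) x)) := by
        rw [hPE]; rfl
      simp only [ContinuousLinearMap.coe_coe] at hx ⊢
      rw [← this, h x, hx]
  -- (1) ↔ (2)
  have iff1 : (LinearMap.range (((T ^ n : H →L[ℂ] H) : H →ₗ[ℂ] H)) ≤ LinearMap.range (A : H →ₗ[ℂ] H)) ↔ T ^ n = Td ∘L T ^ (n + 1) := by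
    rw [h1P, hcomp]
    constructor
    · intro h
      ext x
      simp only [ContinuousLinearMap.comp_apply]
      exact (h x).symm
    · intro h x
      have := ContinuousLinearMap.ext_iff.mp h x
      simp only [ContinuousLinearMap.comp_apply] at this
      exact this.symm
  -- (2) ↔ (3)
  have h23 : (T ^ n = Td ∘L T ^ (n + 1)) ↔ ((T ^ n : H →L[ℂ] H) ∘L Td = Td ∘L (T ^ (n + 1) : H →L[ℂ] H) ∘L Td) := by
    constructor
    · intro h
      rw [h, ContinuousLinearMap.comp_assoc]
    · intro h
      have h' : ((T ^ n : H →L[ℂ] H) ∘L Td) ∘L T = (Td ∘L (T ^ (n + 1) : H →L[ℂ] H) ∘L Td) ∘L T := by rw [h]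
      have hl : ((T ^ n : H →L[ℂ] H) ∘L Td) ∘L T = T ^ n := by
        rw [ContinuousLinearMap.comp_assoc]
        exact hTnP
      have hr2 : (Td ∘L (T ^ (n + 1) : H →L[ℂ] H) ∘L Td) ∘L T = Td ∘L T ^ (n + 1) := by
        rw [ContinuousLinearMap.comp_assoc, ContinuousLinearMap.comp_assoc, ← hPdef, hTkP n]
      rw [hl, hr2] at h'
      exact h'
  -- (2) ↔ (4)
  have h24 : (T ^ n = Td ∘L T ^ (n + 1)) ↔ (A ^ n = (A ^ n : H →L[ℂ] H) ∘L Td ∘L T) := by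
    rw [hcomp]
    constructor
    · intro h
      have := congrArg ContinuousLinearMap.adjoint h
      rw [ContinuousLinearMap.adjoint_comp, hp3, hadjpow] at this
      exact this
    · intro h
      have h2 := congrArg ContinuousLinearMap.adjoint h
      have hadjA : ContinuousLinearMap.adjoint (A ^ n) = T ^ n := by
        rw [← ContinuousLinearMap.star_eq_adjoint, star_pow, ContinuousLinearMap.star_eq_adjoint,
          hA, ContinuousLinearMap.adjoint_adjoint]
      rw [ContinuousLinearMap.adjoint_comp, hadjA, hp3] at h2
      exact h2
  -- (4) ↔ (5)
  have h45 : (A ^ n = (A ^ n : H →L[ℂ] H) ∘L Td ∘L T) ↔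
      (∃ c : ℝ, 0 ≤ c ∧ ∀ x : H, ‖(A ^ n) x‖ ≤ c * ‖T x‖) := by
    constructor
    · intro h
      refine ⟨‖(A ^ n : H →L[ℂ] H) ∘L Td‖, norm_nonneg _, fun x => ?_⟩
      have hx : (A ^ n) x = ((A ^ n : H →L[ℂ] H) ∘L Td) (T x) := by
        conv_lhs => rw [h]
        rfl
      rw [hx]
      exact ContinuousLinearMap.le_opNorm _ _
    · rintro ⟨c, hc, hbound⟩
      ext x
      have hz : T (x - P x) = 0 := by
        rw [map_sub]
        simp only [hPdef, ContinuousLinearMap.comp_apply]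
        rw [hp1', sub_self]
      have hb := hbound (x - P x)
      rw [hz, norm_zero, mul_zero] at hb
      have h0 : (A ^ n) (x - P x) = 0 := by
        have := norm_le_zero_iff.mp hb
        exact this
      rw [map_sub, sub_eq_zero] at h0
      simp only [ContinuousLinearMap.comp_apply]
      rw [h0]
      rfl
  exact ⟨iff1, iff1.trans h23, iff1.trans h24, (iff1.trans h24).trans h45⟩
end

section
/- Let T be an n-hypo-EP bounded operator with closed range on a Hilbert space (range(Tⁿ) ⊆ range(T*)). If TT† commutes with Tⁿ + T*, then T is n-EP (TⁿT† = T†Tⁿ). -/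
theorem stmt_19 {H : Type*} [NormedAddCommGroup H] [InnerProductSpace ℂ H] [CompleteSpace H]
    (T Td : H →L[ℂ] H)
    (hclosed : IsClosed (LinearMap.range (T : H →ₗ[ℂ] H) : Set H))
    (hp1 : T ∘L Td ∘L T = T) (hp2 : Td ∘L T ∘L Td = Td)
    (hp3 : ContinuousLinearMap.adjoint (Td ∘L T) = Td ∘L T)
    (hp4 : ContinuousLinearMap.adjoint (T ∘L Td) = T ∘L Td)
    (n : ℕ) (hhypo : LinearMap.range ((T ^ n : H →L[ℂ] H) : H →ₗ[ℂ] H) ≤ LinearMap.range (ContinuousLinearMap.adjoint T : H →ₗ[ℂ] H))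
    (hcomm : (T ∘L Td) ∘L ((T ^ n) + ContinuousLinearMap.adjoint T) = ((T ^ n) + ContinuousLinearMap.adjoint T) ∘L (T ∘L Td))
    :
    (T ^ n) ∘L Td = Td ∘L (T ^ n) := by
  have hmul : ∀ A B : H →L[ℂ] H, A ∘L B = A * B := fun _ _ => rfl
  simp only [hmul] at hp1 hp2 hp3 hp4 hcomm ⊢
  set S := ContinuousLinearMap.adjoint T with hS
  -- Penrose identities in useful shapes
  have h1 : (T * Td) * T = T := by rw [mul_assoc]; exact hp1
  have h2 : (Td * T) * Td = Td := by rw [mul_assoc]; exact hp2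
  have hPP : T * Td * T * Td = T * Td := by rw [h1]
  have h1' : T * (Td * T) = T := by rw [← mul_assoc]; exact h1
  -- S * (T*Td) = S  (adjoint of (T*Td)*T = T)
  have hSP : S * (T * Td) = S := by
    have h := congrArg ContinuousLinearMap.adjoint h1
    rw [show (T * Td) * T = (T * Td) ∘L T from rfl, ContinuousLinearMap.adjoint_comp, hp4] at h
    exact h
  -- (Td*T) * S = S  (adjoint of T*(Td*T) = T)
  have hQS : Td * T * S = S := by
    have h := congrArg ContinuousLinearMap.adjoint h1'
    rw [show T * (Td * T) = T ∘L (Td * T) from rfl, ContinuousLinearMap.adjoint_comp, hp3] at h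
    exact h
  -- hypo-EP: (Td*T) * T^n = T^n
  have hQTn : Td * T * T ^ n = T ^ n := by
    ext x
    obtain ⟨z, hz⟩ := hhypo ⟨x, rfl⟩
    calc (Td * T * T ^ n) x = (Td * T) ((T ^ n) x) := rfl
      _ = (Td * T) (S z) := congrArg (Td * T) hz.symm
      _ = (Td * T * S) z := rfl
      _ = S z := by rw [hQS]
      _ = (T ^ n) x := hz
  rcases n with _ | m
  · simp
  -- (T*Td) * T^(m+1) = T^(m+1)
  have hPTn : T * Td * T ^ (m + 1) = T ^ (m + 1) := by
    rw [pow_succ', ← mul_assoc, h1]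
  -- auxiliary: T*Td*S*T*Td = T*Td*S
  have hPSP : T * Td * S * T * Td = T * Td * S := by
    rw [mul_assoc (T * Td * S) T Td, mul_assoc (T * Td) S (T * Td), hSP]
  -- from hcomm: T^(m+1) * (T*Td) = T^(m+1)
  have hTnP : T ^ (m + 1) * (T * Td) = T ^ (m + 1) := by
    have h := congrArg (fun X => (T * Td) * X) hcomm
    simp only [mul_add, add_mul, ← mul_assoc, hPP, hPTn, hPSP] at h
    -- h : T^(m+1) + T*Td*S = T^(m+1)*T*Td + T*Td*S
    rw [← mul_assoc]
    exact (add_right_cancel h).symm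
  -- conclude
  have hc : T * T ^ (m + 1) = T ^ (m + 1) * T :=
    (pow_succ' T (m + 1)).symm.trans (pow_succ T (m + 1))
  calc T ^ (m + 1) * Td
      = (Td * T * T ^ (m + 1)) * Td := by rw [hQTn]
    _ = Td * (T * T ^ (m + 1)) * Td := by rw [mul_assoc Td T (T ^ (m + 1))]
    _ = Td * (T ^ (m + 1) * T) * Td := by rw [hc]
    _ = Td * (T ^ (m + 1) * (T * Td)) := by
        rw [mul_assoc Td (T ^ (m + 1) * T) Td, mul_assoc (T ^ (m + 1)) T Td]
    _ = Td * T ^ (m + 1) := by rw [hTnP]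
end
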